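/- Consider the Lasso objective with penalty λ > 0: β̂ minimizes Q̂(b) + λ‖b‖₁ where Q̂(b) = (1/N)Σᵢ(yᵢ − xᵢᵀb)². Suppose the true parameter β₀ is supported on T, and suppose λ ≥ c‖S‖_∞ for some c > 1, where S = 2·(1/N)Σᵢ xᵢ(yᵢ − xᵢᵀβ₀) is the gradient of Q̂ at β₀. Then the error δ = β̂ − β₀ satisfies ‖δ_{T^c}‖₁ ≤ ((c+1)/(c−1))·‖δ_T‖₁. -/

import Mathlib

open Matrix Finset

/-- The restriction of a vector `δ` to a coordinate set `T` (zero outside `T`). -/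
def restr {d : ℕ} (T : Finset (Fin d)) (δ : Fin d → ℝ) : Fin d → ℝ :=
  fun j => if j ∈ T then δ j else 0

/-- The ℓ₁ norm of a vector in `ℝ^d`. -/
def l1norm {d : ℕ} (δ : Fin d → ℝ) : ℝ := ∑ j, |δ j|

/-- The least-squares objective `Q̂(b) = (1/N) Σᵢ (yᵢ − xᵢᵀb)²`. -/
noncomputable def lsObj {N d : ℕ} (x : Fin N → Fin d → ℝ) (y : Fin N → ℝ)
    (b : Fin d → ℝ) : ℝ :=
  (1 / (N : ℝ)) * ∑ i, (y i - x i ⬝ᵥ b) ^ 2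

/-- The score `S = 2 (1/N) Σᵢ xᵢ (yᵢ − xᵢᵀβ₀)`. -/
noncomputable def score {N d : ℕ} (x : Fin N → Fin d → ℝ) (y : Fin N → ℝ)
    (β₀ : Fin d → ℝ) : Fin d → ℝ :=
  fun j => 2 * ((1 / (N : ℝ)) * ∑ i, x i j * (y i - x i ⬝ᵥ β₀))

/-!
Compare the penalized objective at `β̂` and at `β₀`. Since `Q̂` is a convex quadratic whose
gradient at `β₀` is `-S`, we have `Q̂(β₀) - Q̂(β̂) ≤ ⟨S, δ⟩ ≤ ‖S‖_∞ ‖δ‖₁ ≤ (λ/c) ‖δ‖₁`. Because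
`β₀` vanishes off `T`, the triangle inequality gives
`‖β̂‖₁ - ‖β₀‖₁ ≥ ‖δ_{Tᶜ}‖₁ - ‖δ_T‖₁`, and minimality of `β̂` turns these into
`c (‖δ_{Tᶜ}‖₁ - ‖δ_T‖₁) ≤ ‖δ_{Tᶜ}‖₁ + ‖δ_T‖₁`.
-/

section Lasso

variable {N d : ℕ}

theorem l1norm_eq_restr_add_restr_compl (T : Finset (Fin d)) (δ : Fin d → ℝ) :
    l1norm δ = l1norm (restr T δ) + l1norm (restr Tᶜ δ) := by
  simp only [l1norm, restr, ← sum_add_distrib]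
  refine sum_congr rfl fun j _ => ?_
  by_cases h : j ∈ T <;> simp [h]

theorem l1norm_restr_compl_sub_restr_le {β₀ : Fin d → ℝ} {T : Finset (Fin d)}
    (hsupp : ∀ j, β₀ j ≠ 0 → j ∈ T) (b : Fin d → ℝ) :
    l1norm (restr Tᶜ (b - β₀)) - l1norm (restr T (b - β₀)) ≤ l1norm b - l1norm β₀ := by
  simp only [l1norm, restr, ← sum_sub_distrib]
  refine sum_le_sum fun j _ => ?_
  by_cases h : j ∈ T
  · simp only [h, mem_compl, not_true_eq_false, if_false, if_true, Pi.sub_apply, abs_zero]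
    linarith [abs_sub_abs_le_abs_sub (β₀ j) (b j), abs_sub_comm (β₀ j) (b j)]
  · have hβ₀ : β₀ j = 0 := by_contra fun hne => h (hsupp j hne)
    simp [h, hβ₀]

theorem mul_dotProduct_le_mul_l1norm {s v : Fin d → ℝ} {c M : ℝ} (hc : 0 ≤ c)
    (hs : ∀ j, c * |s j| ≤ M) : c * (s ⬝ᵥ v) ≤ M * l1norm v := by
  simp only [dotProduct, l1norm, mul_sum]
  refine sum_le_sum fun j _ => ?_
  calc c * (s j * v j) ≤ c * |s j| * |v j| := by
        rw [mul_assoc, ← abs_mul]; exact mul_le_mul_of_nonneg_left (le_abs_self _) hc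
    _ ≤ M * |v j| := mul_le_mul_of_nonneg_right (hs j) (abs_nonneg _)

theorem score_dotProduct (x : Fin N → Fin d → ℝ) (y : Fin N → ℝ) (β₀ v : Fin d → ℝ) :
    score x y β₀ ⬝ᵥ v = (1 / (N : ℝ)) * ∑ i, 2 * (y i - x i ⬝ᵥ β₀) * (x i ⬝ᵥ v) := by
  simp only [score, dotProduct, mul_sum, sum_mul]
  rw [sum_comm]
  exact sum_congr rfl fun i _ => sum_congr rfl fun j _ => by ring

theorem lsObj_eq (x : Fin N → Fin d → ℝ) (y : Fin N → ℝ) (β₀ b : Fin d → ℝ) :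
    lsObj x y b = lsObj x y β₀ - score x y β₀ ⬝ᵥ (b - β₀)
      + (1 / (N : ℝ)) * ∑ i, (x i ⬝ᵥ (b - β₀)) ^ 2 := by
  have hres : ∀ i, y i - x i ⬝ᵥ b = (y i - x i ⬝ᵥ β₀) - x i ⬝ᵥ (b - β₀) := fun i => by
    rw [dotProduct_sub]; ring
  simp only [lsObj, score_dotProduct, hres, ← mul_sub, ← mul_add, ← sum_sub_distrib,
    ← sum_add_distrib]
  congr 1
  exact sum_congr rfl fun i _ => by ring

theorem lsObj_sub_le_score_dotProduct (x : Fin N → Fin d → ℝ) (y : Fin N → ℝ)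
    (β₀ b : Fin d → ℝ) : lsObj x y β₀ - lsObj x y b ≤ score x y β₀ ⬝ᵥ (b - β₀) := by
  have hquad : 0 ≤ (1 / (N : ℝ)) * ∑ i, (x i ⬝ᵥ (b - β₀)) ^ 2 := by positivity
  linarith [lsObj_eq x y β₀ b]

end Lasso

/-- Restricted-set (cone) property of the Lasso error: if `β̂` minimizes the
penalized objective, `β₀` is supported on `T`, and `λ ≥ c ‖S‖_∞` with `c > 1`,
then `δ = β̂ − β₀` satisfies `‖δ_{Tᶜ}‖₁ ≤ ((c+1)/(c−1)) ‖δ_T‖₁`. -/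
theorem stmt_6 {N d : ℕ} (x : Fin N → Fin d → ℝ) (y : Fin N → ℝ)
    (β₀ βhat : Fin d → ℝ) (T : Finset (Fin d))
    (hsupp : ∀ j, β₀ j ≠ 0 → j ∈ T)
    (lam c : ℝ) (hlam : 0 < lam) (hc : 1 < c)
    (hscore : ∀ j, c * |score x y β₀ j| ≤ lam)
    (hmin : ∀ b : Fin d → ℝ,
      lsObj x y βhat + lam * l1norm βhat ≤ lsObj x y b + lam * l1norm b) :
    l1norm (restr Tᶜ (βhat - β₀)) ≤ ((c + 1) / (c - 1)) * l1norm (restr T (βhat - β₀)) := by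
  set δ := βhat - β₀
  have hpenalty : lam * (l1norm (restr Tᶜ δ) - l1norm (restr T δ))
      ≤ lsObj x y β₀ - lsObj x y βhat := by
    have := mul_le_mul_of_nonneg_left (l1norm_restr_compl_sub_restr_le hsupp βhat) hlam.le
    linarith [hmin β₀]
  have hlinear : c * (score x y β₀ ⬝ᵥ δ) ≤ lam * (l1norm (restr T δ) + l1norm (restr Tᶜ δ)) :=
    l1norm_eq_restr_add_restr_compl T δ ▸ mul_dotProduct_le_mul_l1norm (by linarith) hscore
  have hcone : c * (l1norm (restr Tᶜ δ) - l1norm (restr T δ))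
      ≤ l1norm (restr T δ) + l1norm (restr Tᶜ δ) := by
    refine le_of_mul_le_mul_left ?_ hlam
    have := mul_le_mul_of_nonneg_left
      (hpenalty.trans (lsObj_sub_le_score_dotProduct x y β₀ βhat)) (by linarith : 0 ≤ c)
    linarith
  rw [div_mul_eq_mul_div, le_div_iff₀ (by linarith)]
  linarith
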